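/- arXiv:2312.09963 — 2 statements merged into one kernel-verified Lean document; each statement's English description precedes it below -/
import Mathlib

section
/- For every numeric planning problem Π and every total order < of the actions of Π, the R²∃ <-encoding Π^< of Π is correct: for every bound n ≥ 0, every action sequence in (Π^<_n)^{−1} is a valid plan for Π. -/
open scoped Classical

namespace PatternPlanning

/-! ## Numeric planning problems -/

/-- A linear expression `∑ w, coeff w * w + const` over the numeric variables `VN`. -/
structure LinExpr (VN : Type) where
  coeff : VN → ℚ
  const : ℚ

/-- Value of a linear expression under a numeric valuation. -/
def LinExpr.eval {VN : Type} [Fintype VN] (e : LinExpr VN) (ν : VN → ℚ) : ℚ :=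
  (∑ w, e.coeff w * ν w) + e.const

/-- The comparison operators `≥ , > , =` of numeric conditions `ψ ⊵ 0`. -/
inductive CompOp : Type
  | ge | gt | eq

/-- `op.holds q` means `q ⊵ 0`. -/
def CompOp.holds : CompOp → ℚ → Prop
  | .ge, q => 0 ≤ q
  | .gt, q => 0 < q
  | .eq, q => q = 0

/-- A numeric condition `ψ ⊵ 0`. -/
structure NumCond (VN : Type) where
  expr : LinExpr VN
  op : CompOp

def NumCond.holds {VN : Type} [Fintype VN] (c : NumCond VN) (ν : VN → ℚ) : Prop :=
  c.op.holds (c.expr.eval ν)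

/-- A propositional condition `v = ⊤` or `v = ⊥`. -/
inductive PropCond (VB : Type)
  | isTrue (v : VB)
  | isFalse (v : VB)

def PropCond.holds {VB : Type} : PropCond VB → (VB → Bool) → Prop
  | .isTrue v, β => β v = true
  | .isFalse v, β => β v = false

/-- An action: propositional and numeric preconditions, Boolean effects `v := ⊤/⊥`
and numeric effects `w := ψ` (each variable assigned at most once, enforced by
the functional representation of the effects). -/
structure Act (VB VN : Type) where
  preB : List (PropCond VB)
  preN : List (NumCond VN)
  effB : VB → Option Bool
  effN : VN → Option (LinExpr VN)

def Act.assignsB {VB VN : Type} (a : Act VB VN) (v : VB) : Prop := a.effB v ≠ none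
def Act.assignsN {VB VN : Type} (a : Act VB VN) (x : VN) : Prop := a.effN x ≠ none

/-- The effect `x := e` is a linear increment `x += ψ` : `e = x + ψ` with `ψ` not
containing any variable assigned by `a`. -/
def Act.isIncr {VB VN : Type} (a : Act VB VN) (x : VN) (e : LinExpr VN) : Prop :=
  e.coeff x = 1 ∧ ∀ y, a.assignsN y → y ≠ x → e.coeff y = 0

/-- The increment part `ψ` of a linear increment `x := x + ψ`. -/
noncomputable def incrPart {VN : Type} (e : LinExpr VN) (x : VN) : LinExpr VN :=
  ⟨Function.update e.coeff x 0, e.const⟩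

/-- The (general) assignment `x := e` is simple: `e` contains no variable assigned by `a`. -/
def Act.isSimpleA {VB VN : Type} (a : Act VB VN) (e : LinExpr VN) : Prop :=
  ∀ y, a.assignsN y → e.coeff y = 0

/-- An action is eligible for rolling. -/
def Act.eligible {VB VN : Type} (a : Act VB VN) : Prop :=
  (∀ v, PropCond.isFalse v ∈ a.preB → a.effB v ≠ some true) ∧
  (∀ v, PropCond.isTrue v ∈ a.preB → a.effB v ≠ some false) ∧
  (∀ x e, a.effN x = some e → a.isIncr x e ∨ a.isSimpleA e) ∧
  (∃ x e, a.effN x = some e ∧ a.isIncr x e)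

/-- A state: values of the Boolean and numeric variables. -/
structure PState (VB VN : Type) where
  boolVal : VB → Bool
  numVal : VN → ℚ

/-- `a` is executable in `s`: all preconditions of `a` hold in `s`. -/
def Act.execIn {VB VN : Type} [Fintype VN] (a : Act VB VN) (s : PState VB VN) : Prop :=
  (∀ c ∈ a.preB, c.holds s.boolVal) ∧ (∀ c ∈ a.preN, c.holds s.numVal)

/-- The result of executing `a` in `s`. -/
def Act.result {VB VN : Type} [Fintype VN] (a : Act VB VN) (s : PState VB VN) : PState VB VN where
  boolVal := fun v => (a.effB v).getD (s.boolVal v)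
  numVal := fun x =>
    match a.effN x with
    | none => s.numVal x
    | some e => e.eval s.numVal

/-- Execution of a sequence of actions: `some` of the last induced state if the
sequence is executable, `none` otherwise. -/
noncomputable def execSeq {VB VN A : Type} [Fintype VN] (acts : A → Act VB VN) :
    List A → PState VB VN → Option (PState VB VN)
  | [], s => some s
  | a :: rest, s =>
      if (acts a).execIn s then execSeq acts rest ((acts a).result s) else none

/-- Goal formulas: propositional combinations of propositional and numeric conditions. -/
inductive Formula (VB VN : Type)
  | prop (c : PropCond VB)
  | num (c : NumCond VN)
  | not (f : Formula VB VN)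
  | and (f g : Formula VB VN)
  | or (f g : Formula VB VN)

def Formula.holds {VB VN : Type} [Fintype VN] :
    Formula VB VN → (VB → Bool) → (VN → ℚ) → Prop
  | .prop c, β, _ => c.holds β
  | .num c, _, ν => c.holds ν
  | .not f, β, ν => ¬ f.holds β ν
  | .and f g, β, ν => f.holds β ν ∧ g.holds β ν
  | .or f g, β, ν => f.holds β ν ∨ g.holds β ν

/-- A numeric planning problem `Π = ⟨V_B, V_N, A, I, G⟩` (the sets of variables and
of actions are the types `VB`, `VN`, `A`). -/
structure Problem (VB VN A : Type) where
  acts : A → Act VB VN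
  init : PState VB VN
  goals : List (Formula VB VN)

def Problem.goalSat {VB VN A : Type} [Fintype VN] (P : Problem VB VN A)
    (β : VB → Bool) (ν : VN → ℚ) : Prop :=
  ∀ f ∈ P.goals, f.holds β ν

/-- `α` is a valid plan for `P`. -/
def Problem.isPlan {VB VN A : Type} [Fintype VN] (P : Problem VB VN A) (α : List A) : Prop :=
  ∃ s, execSeq P.acts α P.init = some s ∧ P.goalSat s.boolVal s.numVal

def Problem.hasPlan {VB VN A : Type} [Fintype VN] (P : Problem VB VN A) : Prop :=
  ∃ α, P.isPlan α

/-! ## ψ[a] : rolled substitution -/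

/-- Value of the variable `x` in `ψ[a]` when the action variable of `a` takes value `k`:
`x + (k-1)·ψ₁` for a linear increment `x += ψ₁`, `ψ₁` for a simple assignment `x := ψ₁`,
`x` otherwise. -/
noncomputable def rolledVarVal {VB VN : Type} [Fintype VN] (a : Act VB VN) (k : ℕ)
    (ν : VN → ℚ) (x : VN) : ℚ :=
  match a.effN x with
  | none => ν x
  | some e =>
      if a.isIncr x e then ν x + ((k : ℚ) - 1) * (incrPart e x).eval ν
      else if a.isSimpleA e then e.eval ν
      else ν x

/-- Value of `ψ[a]` under `ν` when the action variable of `a` takes the value `k`. -/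
noncomputable def rolledEval {VB VN : Type} [Fintype VN] (a : Act VB VN) (k : ℕ)
    (ψ : LinExpr VN) (ν : VN → ℚ) : ℚ :=
  (∑ x, ψ.coeff x * rolledVarVal a k ν x) + ψ.const

/-! ## The rolled-up encoding Π^R and the standard encoding Π^S -/

def occursInPre {VB VN : Type} (a : Act VB VN) (x : VN) : Prop :=
  ∃ c ∈ a.preN, c.expr.coeff x ≠ 0

def occursInEff {VB VN : Type} (a : Act VB VN) (x : VN) : Prop :=
  a.assignsN x ∨ ∃ y e, a.effN y = some e ∧ e.coeff x ≠ 0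

/-- Condition under which `mutex^R(A)` contains `a₁ = 0 ∨ a₂ = 0`. -/
def mutexCond {VB VN : Type} (a₁ a₂ : Act VB VN) : Prop :=
  (∃ v, PropCond.isFalse v ∈ a₁.preB ∧ a₂.effB v = some true) ∨
  (∃ v, PropCond.isTrue v ∈ a₁.preB ∧ a₂.effB v = some false) ∨
  (∃ x, a₁.assignsN x ∧ (occursInEff a₂ x ∨ occursInPre a₂ x))

/-- The symbolic transition relation `T^R(X,A,X')` of the rolled-up encoding, as a
predicate on the values `β,ν` for `X`, `u` for the (ℕ-valued) action variables `A`,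
and `β',ν'` for `X'`. -/
def TR {VB VN A : Type} [Fintype VN] (P : Problem VB VN A)
    (β : VB → Bool) (ν : VN → ℚ) (u : A → ℕ) (β' : VB → Bool) (ν' : VN → ℚ) : Prop :=
  -- pre^R(A)
  (∀ a, 0 < u a →
    (∀ v, PropCond.isFalse v ∈ (P.acts a).preB → β v = false) ∧
    (∀ v, PropCond.isTrue v ∈ (P.acts a).preB → β v = true) ∧
    (∀ c ∈ (P.acts a).preN, c.op.holds (c.expr.eval ν))) ∧
  (∀ a, 1 < u a → ∀ c ∈ (P.acts a).preN,
    c.op.holds (rolledEval (P.acts a) (u a) c.expr ν)) ∧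
  -- eff^R(A)
  (∀ a, 0 < u a →
    (∀ v b, (P.acts a).effB v = some b → β' v = b) ∧
    (∀ x e, (P.acts a).effN x = some e →
      ((P.acts a).isIncr x e → ν' x = ν x + (u a : ℚ) * (incrPart e x).eval ν) ∧
      (¬ (P.acts a).isIncr x e → ν' x = e.eval ν))) ∧
  -- frame^R(V_B ∪ V_N)
  (∀ v, (∀ a, (P.acts a).assignsB v → u a = 0) → β' v = β v) ∧
  (∀ x, (∀ a, (P.acts a).assignsN x → u a = 0) → ν' x = ν x) ∧
  -- mutex^R(A)
  (∀ a₁ a₂, a₁ ≠ a₂ → mutexCond (P.acts a₁) (P.acts a₂) → u a₁ = 0 ∨ u a₂ = 0) ∧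
  -- amo^R(A)
  (∀ a, ¬ (P.acts a).eligible → u a ≤ 1)

/-- The symbolic transition relation `T^S` of the standard encoding: `T^R` plus
`a = 0 ∨ a = 1` for every action. -/
def TS {VB VN A : Type} [Fintype VN] (P : Problem VB VN A)
    (β : VB → Bool) (ν : VN → ℚ) (u : A → ℕ) (β' : VB → Bool) (ν' : VN → ℚ) : Prop :=
  TR P β ν u β' ν' ∧ ∀ a, u a ≤ 1

/-- A (candidate) model of `Π^R_n` / `Π^S_n` : values for the `n+1` copies of the state
variables and the `n` copies of the ℕ-valued action variables. -/
structure RModel (VB VN A : Type) (n : ℕ) where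
  β : Fin (n + 1) → VB → Bool
  ν : Fin (n + 1) → VN → ℚ
  u : Fin n → A → ℕ

def RModel.validWith {VB VN A : Type} {n : ℕ} [Fintype VN] (m : RModel VB VN A n)
    (P : Problem VB VN A)
    (T : (VB → Bool) → (VN → ℚ) → (A → ℕ) → (VB → Bool) → (VN → ℚ) → Prop) : Prop :=
  m.β 0 = P.init.boolVal ∧ m.ν 0 = P.init.numVal ∧
  (∀ i : Fin n, T (m.β i.castSucc) (m.ν i.castSucc) (m.u i) (m.β i.succ) (m.ν i.succ)) ∧
  P.goalSat (m.β (Fin.last n)) (m.ν (Fin.last n))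

/-- `m` is a model of `Π^R_n`. -/
def RModel.validR {VB VN A : Type} {n : ℕ} [Fintype VN] (m : RModel VB VN A n)
    (P : Problem VB VN A) : Prop :=
  m.validWith P (TR P)

/-- `m` is a model of `Π^S_n`. -/
def RModel.validS {VB VN A : Type} {n : ℕ} [Fintype VN] (m : RModel VB VN A n)
    (P : Problem VB VN A) : Prop :=
  m.validWith P (TS P)

/-- The decoding of the rolled-up/standard encoding: the sequences in which each
action `a` occurs `u a` times consecutively. -/
def decodesRolled {A : Type} (u : A → ℕ) (α : List A) : Prop :=
  ∃ l : List A, l.Nodup ∧ (∀ a, a ∈ l) ∧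
    α = l.flatMap (fun a => List.replicate (u a) a)

/-- The sequences of actions associated to the model `m` of `Π^R_n`/`Π^S_n`
(the set `(Π^R_n)⁻¹` is the union of `m.plans` over the models `m`). -/
def RModel.plans {VB VN A : Type} {n : ℕ} (m : RModel VB VN A n) (α : List A) : Prop :=
  ∃ αs : Fin n → List A, (∀ i, decodesRolled (m.u i) (αs i)) ∧ α = (List.ofFn αs).flatten

/-- `Π^R_n` is satisfiable. -/
def satR {VB VN A : Type} [Fintype VN] (P : Problem VB VN A) (n : ℕ) : Prop :=
  ∃ m : RModel VB VN A n, m.validR P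

/-- `Π^S_n` is satisfiable. -/
def satS {VB VN A : Type} [Fintype VN] (P : Problem VB VN A) (n : ℕ) : Prop :=
  ∃ m : RModel VB VN A n, m.validS P

/-! ## The R²∃ <-encoding Π^< -/

/-- Value of `v^{≪,·}` after chaining through the actions of `l`:
the last auxiliary variable of an action of `l` assigning `v`, else the initial value. -/
noncomputable def chainB {VB VN A : Type} (acts : A → Act VB VN) (l : List A)
    (β : VB → Bool) (aux : A → VB → Bool) (v : VB) : Bool :=
  l.foldl (fun val b => if ((acts b).effB v).isSome then aux b v else val) (β v)

noncomputable def chainN {VB VN A : Type} (acts : A → Act VB VN) (l : List A)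
    (ν : VN → ℚ) (aux : A → VN → ℚ) (x : VN) : ℚ :=
  l.foldl (fun val b => if ((acts b).effN x).isSome then aux b x else val) (ν x)

/-- The actions strictly preceding `a` in the total order `ord`. -/
noncomputable def before {A : Type} (ord : List A) (a : A) : List A :=
  ord.takeWhile (fun b => decide (b ≠ a))

/-- The symbolic transition relation `T^<(X,A,X')` of the R²∃ `<`-encoding.
`actb` gives the values of the Boolean action variables, `auxB`/`auxN` the values of the
fresh state variables `v^a`. -/
def Tlt {VB VN A : Type} [Fintype VN] (P : Problem VB VN A) (ord : List A)
    (β : VB → Bool) (ν : VN → ℚ) (actb : A → Bool)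
    (auxB : A → VB → Bool) (auxN : A → VN → ℚ)
    (β' : VB → Bool) (ν' : VN → ℚ) : Prop :=
  -- pre^<(A)
  (∀ a, actb a = true →
    (∀ v, PropCond.isFalse v ∈ (P.acts a).preB →
      chainB P.acts (before ord a) β auxB v = false) ∧
    (∀ v, PropCond.isTrue v ∈ (P.acts a).preB →
      chainB P.acts (before ord a) β auxB v = true) ∧
    (∀ c ∈ (P.acts a).preN,
      c.op.holds (c.expr.eval (chainN P.acts (before ord a) ν auxN)))) ∧
  -- eff^<(A)
  (∀ a v b, (P.acts a).effB v = some b →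
    (actb a = true → auxB a v = b) ∧
    (actb a = false → auxB a v = chainB P.acts (before ord a) β auxB v)) ∧
  (∀ a x e, (P.acts a).effN x = some e →
    (actb a = true → auxN a x = e.eval (chainN P.acts (before ord a) ν auxN)) ∧
    (actb a = false → auxN a x = chainN P.acts (before ord a) ν auxN x)) ∧
  -- frame^<(V_B ∪ V_N)
  (∀ v, β' v = chainB P.acts ord β auxB v) ∧
  (∀ x, ν' x = chainN P.acts ord ν auxN x)

/-- A (candidate) model of `Π^<_n`. -/
structure LtModel (VB VN A : Type) (n : ℕ) where
  β : Fin (n + 1) → VB → Bool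
  ν : Fin (n + 1) → VN → ℚ
  actb : Fin n → A → Bool
  auxB : Fin n → A → VB → Bool
  auxN : Fin n → A → VN → ℚ

def LtModel.valid {VB VN A : Type} {n : ℕ} [Fintype VN] (m : LtModel VB VN A n)
    (P : Problem VB VN A) (ord : List A) : Prop :=
  m.β 0 = P.init.boolVal ∧ m.ν 0 = P.init.numVal ∧
  (∀ i : Fin n, Tlt P ord (m.β i.castSucc) (m.ν i.castSucc) (m.actb i)
      (m.auxB i) (m.auxN i) (m.β i.succ) (m.ν i.succ)) ∧
  P.goalSat (m.β (Fin.last n)) (m.ν (Fin.last n))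

/-- The plan decoded from a model of `Π^<_n`: at each step, the actions of `ord`
whose Boolean action variable is true, in the order of `ord`. -/
def LtModel.plan {VB VN A : Type} {n : ℕ} (m : LtModel VB VN A n) (ord : List A) : List A :=
  (List.ofFn fun i : Fin n => ord.filter (m.actb i)).flatten

/-- `Π^<_n` is satisfiable. -/
def satLt {VB VN A : Type} [Fintype VN] (P : Problem VB VN A) (ord : List A) (n : ℕ) : Prop :=
  ∃ m : LtModel VB VN A n, m.valid P ord

/-! ## The pattern ≺-encoding Π^≺ -/

/-- `σ^{≺₁}(v)` for Boolean `v`, where `≺₁` is the prefix of `pat` of length `j`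
(`act j` is the value of the action variable of the `j`-th occurrence in the pattern). -/
noncomputable def sigB {VB VN A : Type} (acts : A → Act VB VN) (pat : List A)
    (act : ℕ → ℕ) (β : VB → Bool) : ℕ → VB → Bool
  | 0 => β
  | j + 1 => fun v =>
      match pat[j]? with
      | none => sigB acts pat act β j v
      | some a =>
          match (acts a).effB v with
          | some true => sigB acts pat act β j v || decide (0 < act j)
          | some false => sigB acts pat act β j v && decide (act j = 0)
          | none => sigB acts pat act β j v

/-- `σ^{≺₁}(x)` for numeric `x` (`aux j` gives the values of the fresh variables
`x^{≺₁;a}` introduced for the general assignments of the `j`-th occurrence). -/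
noncomputable def sigN {VB VN A : Type} [Fintype VN] (acts : A → Act VB VN) (pat : List A)
    (act : ℕ → ℕ) (aux : ℕ → VN → ℚ) (ν : VN → ℚ) : ℕ → VN → ℚ
  | 0 => ν
  | j + 1 => fun x =>
      match pat[j]? with
      | none => sigN acts pat act aux ν j x
      | some a =>
          match (acts a).effN x with
          | none => sigN acts pat act aux ν j x
          | some e =>
              if (acts a).isIncr x e then
                sigN acts pat act aux ν j x +
                  (act j : ℚ) * (incrPart e x).eval (sigN acts pat act aux ν j)
              else aux j x

/-- The symbolic transition relation `T^≺(X,A,X')` of the pattern `≺`-encoding. -/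
def Tpat {VB VN A : Type} [Fintype VN] (P : Problem VB VN A) (pat : List A)
    (β : VB → Bool) (ν : VN → ℚ) (act : ℕ → ℕ) (aux : ℕ → VN → ℚ)
    (β' : VB → Bool) (ν' : VN → ℚ) : Prop :=
  (∀ (j : ℕ) (hj : j < pat.length),
    -- pre^≺(A)
    (∀ v, PropCond.isFalse v ∈ (P.acts (pat.get ⟨j, hj⟩)).preB → 0 < act j →
      sigB P.acts pat act β j v = false) ∧
    (∀ v, PropCond.isTrue v ∈ (P.acts (pat.get ⟨j, hj⟩)).preB → 0 < act j →
      sigB P.acts pat act β j v = true) ∧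
    (∀ c ∈ (P.acts (pat.get ⟨j, hj⟩)).preN,
      (0 < act j → c.op.holds (c.expr.eval (sigN P.acts pat act aux ν j))) ∧
      (1 < act j → c.op.holds
        (rolledEval (P.acts (pat.get ⟨j, hj⟩)) (act j) c.expr (sigN P.acts pat act aux ν j)))) ∧
    -- eff^≺(A) (for the general assignments)
    (∀ x e, (P.acts (pat.get ⟨j, hj⟩)).effN x = some e →
      ¬ (P.acts (pat.get ⟨j, hj⟩)).isIncr x e →
      (act j = 0 → aux j x = sigN P.acts pat act aux ν j x) ∧
      (0 < act j → aux j x = e.eval (sigN P.acts pat act aux ν j))) ∧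
    -- amo^≺(A)
    (¬ (P.acts (pat.get ⟨j, hj⟩)).eligible → act j ≤ 1)) ∧
  -- frame^≺(V_B ∪ V_N)
  (∀ v, β' v = sigB P.acts pat act β pat.length v) ∧
  (∀ x, ν' x = sigN P.acts pat act aux ν pat.length x)

/-- The sequence decoded from the values `act` of the action variables of the pattern:
the `j`-th occurrence repeated `act j` times, in the order of the pattern. -/
def decodePat {A : Type} (pat : List A) (act : ℕ → ℕ) : List A :=
  (List.ofFn fun j : Fin pat.length => List.replicate (act j.val) (pat.get j)).flatten

/-- A (candidate) model of `Π^≺_n`. -/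
structure PatModel (VB VN A : Type) (n : ℕ) where
  β : Fin (n + 1) → VB → Bool
  ν : Fin (n + 1) → VN → ℚ
  act : Fin n → ℕ → ℕ
  aux : Fin n → ℕ → VN → ℚ

def PatModel.valid {VB VN A : Type} {n : ℕ} [Fintype VN] (m : PatModel VB VN A n)
    (P : Problem VB VN A) (pat : List A) : Prop :=
  m.β 0 = P.init.boolVal ∧ m.ν 0 = P.init.numVal ∧
  (∀ i : Fin n, Tpat P pat (m.β i.castSucc) (m.ν i.castSucc) (m.act i) (m.aux i)
      (m.β i.succ) (m.ν i.succ)) ∧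
  P.goalSat (m.β (Fin.last n)) (m.ν (Fin.last n))

/-- The plan decoded from a model of `Π^≺_n`. -/
def PatModel.plan {VB VN A : Type} {n : ℕ} (m : PatModel VB VN A n) (pat : List A) : List A :=
  (List.ofFn fun i : Fin n => decodePat pat (m.act i)).flatten

/-- `Π^≺_n` is satisfiable. -/
def satPat {VB VN A : Type} [Fintype VN] (P : Problem VB VN A) (pat : List A) (n : ℕ) : Prop :=
  ∃ m : PatModel VB VN A n, m.valid P pat

/-! ## Abstract encodings -/

/-- An abstract encoding `Π^E = ⟨X, A, I(X), T(X,A,X'), G(X)⟩` of a problem: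
`XAsgn` is the type of assignments to the state variables `X ⊇ V_B ∪ V_N`
(with projections giving the values of the variables of `V_B ∪ V_N`), `AAsgn` the type
of assignments to the action variables, `T` the symbolic transition relation and
`decode` its decoding function, associating at least one action sequence to each model. -/
structure Encoding (VB VN A : Type) where
  XAsgn : Type
  AAsgn : Type
  projB : XAsgn → VB → Bool
  projN : XAsgn → VN → ℚ
  T : XAsgn → AAsgn → XAsgn → Prop
  decode : XAsgn → AAsgn → XAsgn → List A → Prop
  decode_exists : ∀ x u x', T x u x' → ∃ α, decode x u x' α

def Encoding.stateOf {VB VN A : Type} (E : Encoding VB VN A) (x : E.XAsgn) : PState VB VN :=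
  ⟨E.projB x, E.projN x⟩

/-- The symbolic transition relation of `E` is correct: every action sequence
corresponding to a model of `T` is executable in the state given by the model and
leads to the state given by the primed variables. -/
def Encoding.correctT {VB VN A : Type} [Fintype VN] (E : Encoding VB VN A)
    (P : Problem VB VN A) : Prop :=
  ∀ x u x', E.T x u x' → ∀ α, E.decode x u x' α →
    execSeq P.acts α (E.stateOf x) = some (E.stateOf x')

/-- A (candidate) model of `Π^E_n`. -/
structure EncModel {VB VN A : Type} (E : Encoding VB VN A) (n : ℕ) where
  xs : Fin (n + 1) → E.XAsgn
  us : Fin n → E.AAsgn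

def EncModel.valid {VB VN A : Type} [Fintype VN] {E : Encoding VB VN A} {n : ℕ}
    (m : EncModel E n) (P : Problem VB VN A) : Prop :=
  E.projB (m.xs 0) = P.init.boolVal ∧ E.projN (m.xs 0) = P.init.numVal ∧
  (∀ i : Fin n, E.T (m.xs i.castSucc) (m.us i) (m.xs i.succ)) ∧
  P.goalSat (E.projB (m.xs (Fin.last n))) (E.projN (m.xs (Fin.last n)))

/-- The action sequences associated to a model of `Π^E_n`
(`(Π^E_n)⁻¹` is the union of `m.plans` over the models `m` of `Π^E_n`). -/
def EncModel.plans {VB VN A : Type} {E : Encoding VB VN A} {n : ℕ}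
    (m : EncModel E n) (α : List A) : Prop :=
  ∃ αs : Fin n → List A,
    (∀ i, E.decode (m.xs i.castSucc) (m.us i) (m.xs i.succ) (αs i)) ∧
    α = (List.ofFn αs).flatten

/-- The quantity `Δ` for an action `a` and an expression `ψ`: the sum, over the linear
increments `x += ψ₁` of `a` with `x` occurring in `ψ`, of `ψ₁` weighted by the coefficient
of `x` in `ψ`. -/
noncomputable def deltaVal {VB VN : Type} [Fintype VN] (a : Act VB VN)
    (ψ : LinExpr VN) (ν : VN → ℚ) : ℚ :=
  ∑ x, ψ.coeff x *
    (match a.effN x with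
     | some e => if a.isIncr x e then (incrPart e x).eval ν else 0
     | none => 0)

/-! Along the order `<`, the values `v^{≪,a}` are exactly the state reached by executing the
selected actions that precede `a`: an unselected action copies its variables, a selected one
applies its effects to the state it was checked in. So every selected action is executed in
the state where `pre^<` checked it, and `frame^<` identifies the final state with `X'`. -/

section Execution

variable {VB VN A : Type} [Fintype VN] (acts : A → Act VB VN)

theorem execSeq_append (α γ : List A) (s : PState VB VN) :
    execSeq acts (α ++ γ) s = (execSeq acts α s).bind (execSeq acts γ) := by
  induction α generalizing s with
  | nil => rfl
  | cons a α ih =>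
    simp only [List.cons_append, execSeq]
    split_ifs
    exacts [ih _, rfl]

theorem execSeq_flatten_ofFn {k : ℕ} (f : Fin k → List A) (s : Fin (k + 1) → PState VB VN)
    (h : ∀ i, execSeq acts (f i) (s i.castSucc) = some (s i.succ)) :
    execSeq acts (List.ofFn f).flatten (s 0) = some (s (Fin.last k)) := by
  induction k with
  | zero => rfl
  | succ k ih =>
    rw [List.ofFn_succ, List.flatten_cons, execSeq_append, show s 0 = s (Fin.castSucc 0) from rfl,
      h 0, Option.bind_some]
    exact ih (fun i => f i.succ) (fun i => s i.succ) fun i => h i.succ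

theorem execSeq_filter_of_prefix_steps (p : A → Bool) (ord : List A)
    (σ : List A → PState VB VN)
    (hstep : ∀ l a r, ord = l ++ a :: r →
      execSeq acts ([a].filter p) (σ l) = some (σ (l ++ [a]))) :
    execSeq acts (ord.filter p) (σ []) = some (σ ord) := by
  suffices ∀ r l, ord = l ++ r → execSeq acts (r.filter p) (σ l) = some (σ ord) from
    this ord [] rfl
  intro r
  induction r with
  | nil => intro l h; simp [h, execSeq]
  | cons a r ih =>
    intro l h
    rw [← List.singleton_append, List.filter_append, execSeq_append, hstep l a r h,
      Option.bind_some]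
    exact ih (l ++ [a]) (by simp [h])

end Execution

section Chain

variable {VB VN A : Type} (acts : A → Act VB VN)

theorem before_append_cons {l : List A} {a : A} (r : List A) (ha : a ∉ l) :
    before (l ++ a :: r) a = l := by
  induction l with
  | nil => simp [before]
  | cons b l ih =>
    simpa [before, Ne.symm (List.ne_of_not_mem_cons ha)] using
      ih (List.not_mem_of_not_mem_cons ha)

theorem chainB_append_singleton (l : List A) (a : A) (β : VB → Bool)
    (aux : A → VB → Bool) (v : VB) :
    chainB acts (l ++ [a]) β aux v =
      if ((acts a).effB v).isSome then aux a v else chainB acts l β aux v := by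
  simp [chainB, List.foldl_append]

theorem chainN_append_singleton (l : List A) (a : A) (ν : VN → ℚ)
    (aux : A → VN → ℚ) (x : VN) :
    chainN acts (l ++ [a]) ν aux x =
      if ((acts a).effN x).isSome then aux a x else chainN acts l ν aux x := by
  simp [chainN, List.foldl_append]

/-- For `l = before ord a`, this is the state `v ↦ v^{≪,a}`. -/
noncomputable def chainState (l : List A) (β : VB → Bool) (ν : VN → ℚ)
    (auxB : A → VB → Bool) (auxN : A → VN → ℚ) : PState VB VN :=
  ⟨chainB acts l β auxB, chainN acts l ν auxN⟩

end Chain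

namespace Tlt

variable {VB VN A : Type} [Fintype VN] {P : Problem VB VN A} {ord : List A}
  {β : VB → Bool} {ν : VN → ℚ} {actb : A → Bool} {auxB : A → VB → Bool}
  {auxN : A → VN → ℚ} {β' : VB → Bool} {ν' : VN → ℚ}

theorem chainState_append_of_inactive (hT : Tlt P ord β ν actb auxB auxN β' ν') {a : A}
    (ha : actb a = false) :
    chainState P.acts (before ord a ++ [a]) β ν auxB auxN =
      chainState P.acts (before ord a) β ν auxB auxN := by
  obtain ⟨-, heffB, heffN, -⟩ := hT
  simp only [chainState, PState.mk.injEq]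
  constructor
  · funext v
    rw [chainB_append_singleton]
    split
    · next hs =>
      obtain ⟨b, hb⟩ := Option.isSome_iff_exists.mp hs
      exact (heffB a v b hb).2 ha
    · rfl
  · funext x
    rw [chainN_append_singleton]
    split
    · next hs =>
      obtain ⟨e, he⟩ := Option.isSome_iff_exists.mp hs
      exact (heffN a x e he).2 ha
    · rfl

theorem execIn_of_active (hT : Tlt P ord β ν actb auxB auxN β' ν') {a : A}
    (ha : actb a = true) :
    (P.acts a).execIn (chainState P.acts (before ord a) β ν auxB auxN) := by
  obtain ⟨hfalse, htrue, hnum⟩ := hT.1 a ha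
  refine ⟨fun c hc => ?_, hnum⟩
  cases c with
  | isTrue v => exact htrue v hc
  | isFalse v => exact hfalse v hc

theorem result_of_active (hT : Tlt P ord β ν actb auxB auxN β' ν') {a : A}
    (ha : actb a = true) :
    (P.acts a).result (chainState P.acts (before ord a) β ν auxB auxN) =
      chainState P.acts (before ord a ++ [a]) β ν auxB auxN := by
  obtain ⟨-, heffB, heffN, -⟩ := hT
  simp only [Act.result, chainState, PState.mk.injEq]
  constructor
  · funext v
    rw [chainB_append_singleton]
    cases hb : (P.acts a).effB v with
    | none => rfl
    | some b => simp [(heffB a v b hb).1 ha]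
  · funext x
    rw [chainN_append_singleton]
    cases he : (P.acts a).effN x with
    | none => rfl
    | some e => simp [(heffN a x e he).1 ha]

theorem execSeq_filter_singleton (hT : Tlt P ord β ν actb auxB auxN β' ν') (a : A) :
    execSeq P.acts ([a].filter actb) (chainState P.acts (before ord a) β ν auxB auxN) =
      some (chainState P.acts (before ord a ++ [a]) β ν auxB auxN) := by
  cases ha : actb a with
  | false => simp [ha, execSeq, hT.chainState_append_of_inactive ha]
  | true => simp [ha, execSeq, hT.execIn_of_active ha, hT.result_of_active ha]

theorem execSeq_filter (hT : Tlt P ord β ν actb auxB auxN β' ν') (hnd : ord.Nodup) :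
    execSeq P.acts (ord.filter actb) ⟨β, ν⟩ = some ⟨β', ν'⟩ := by
  have hframe : chainState P.acts ord β ν auxB auxN = ⟨β', ν'⟩ := by
    obtain ⟨-, -, -, hβ', hν'⟩ := hT
    simp only [chainState, PState.mk.injEq]
    exact ⟨funext fun v => (hβ' v).symm, funext fun x => (hν' x).symm⟩
  rw [← hframe]
  refine execSeq_filter_of_prefix_steps P.acts actb ord
    (fun l => chainState P.acts l β ν auxB auxN) fun l a r hord => ?_
  have ha : a ∉ l := fun hal => List.disjoint_of_nodup_append (hord ▸ hnd) hal
    List.mem_cons_self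
  have hbefore : before ord a = l := hord ▸ before_append_cons r ha
  simpa only [hbefore] using hT.execSeq_filter_singleton a

end Tlt

theorem r2e_encoding_correct_general
    {VB VN A : Type} [Fintype VN]
    (P : Problem VB VN A) (ord : List A) (hnd : ord.Nodup)
    (n : ℕ) (m : LtModel VB VN A n) (hm : m.valid P ord) :
    P.isPlan (m.plan ord) := by
  obtain ⟨hβ0, hν0, hT, hgoal⟩ := hm
  let s : Fin (n + 1) → PState VB VN := fun i => ⟨m.β i, m.ν i⟩
  have hinit : s 0 = P.init := by simp [s, hβ0, hν0]
  refine ⟨s (Fin.last n), ?_, hgoal⟩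
  rw [← hinit]
  exact execSeq_flatten_ofFn P.acts _ s fun i => (hT i).execSeq_filter hnd

/-- for every total order `<` of the actions (represented by the
duplicate-free list `ord` containing every action), the R²∃ `<`-encoding `Π^<` is
correct: for every bound `n`, every action sequence in `(Π^<_n)⁻¹` is a valid plan. -/
theorem r2e_encoding_correct
    {VB VN A : Type} [Fintype VB] [Fintype VN] [Fintype A]
    (P : Problem VB VN A) (ord : List A) (hnd : ord.Nodup) (hall : ∀ a : A, a ∈ ord)
    (n : ℕ) (m : LtModel VB VN A n) (hm : m.valid P ord) :
    P.isPlan (m.plan ord) :=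
  r2e_encoding_correct_general P ord hnd n m hm
end PatternPlanning
end

section
/- For every numeric planning problem Π and every total order < of the actions of Π, the R²∃ <-encoding Π^< dominates the standard encoding Π^S: for every bound n ≥ 0, if Π^S_n is satisfiable then Π^<_n is satisfiable; moreover, from any model of Π^S_n one can define a model of Π^<_n with the same corresponding plan. -/
open scoped Classical

namespace PatternPlanning

/-! A model of `Π^S_n` has at most one occurrence of each action per step, and the mutex
constraints make the actions of a step commute. Reading the step along `<`, the fresh variable
`v^a` can therefore take the value `v'` of the next state as soon as some executed action up to
and including `a` assigns `v`, and the value `v` of the current state otherwise: the mutex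
constraints guarantee that every executed action still sees the current-state values of the
variables it reads, and the frame axioms that the chain ends in the next state. -/

theorem LinExpr.eval_congr {VN : Type} [Fintype VN] (e : LinExpr VN) {ν₁ ν₂ : VN → ℚ}
    (h : ∀ x, e.coeff x ≠ 0 → ν₁ x = ν₂ x) : e.eval ν₁ = e.eval ν₂ := by
  unfold LinExpr.eval
  congr 1
  refine Finset.sum_congr rfl fun x _ => ?_
  by_cases hx : e.coeff x = 0
  · simp [hx]
  · rw [h x hx]

theorem incrPart_eval {VN : Type} [Fintype VN] {e : LinExpr VN} {x : VN} (hx : e.coeff x = 1)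
    (ν : VN → ℚ) : (incrPart e x).eval ν = e.eval ν - ν x := by
  have hsplit : ∀ y, e.coeff y * ν y =
      Function.update e.coeff x 0 y * ν y + if y = x then e.coeff x * ν x else 0 := by
    intro y
    by_cases hy : y = x
    · subst hy; simp
    · simp [hy]
  simp only [LinExpr.eval, incrPart, hsplit, Finset.sum_add_distrib, Finset.sum_ite_eq',
    Finset.mem_univ, if_true, hx]
  ring

section Before

variable {A : Type} {ord : List A}

theorem before_isPrefix (ord : List A) (a : A) : before ord a <+: ord :=
  List.takeWhile_prefix _

theorem ne_of_mem_before {a c : A} (h : c ∈ before ord a) : c ≠ a := by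
  simpa using List.mem_takeWhile_imp h

theorem before_eq_of_eq_append (hnd : ord.Nodup) {l₁ l₂ : List A} {b : A}
    (h : ord = l₁ ++ b :: l₂) : before ord b = l₁ := by
  subst h
  induction l₁ with
  | nil => simp [before]
  | cons a t ih =>
    obtain ⟨ha, hnd'⟩ := List.nodup_cons.mp hnd
    have hab : a ≠ b := by rintro rfl; simp at ha
    rw [List.cons_append, before, List.takeWhile_cons_of_pos (by simp [hab])]
    exact congrArg _ (ih hnd')

end Before

section LastWrite

variable {A γ : Type}

theorem foldl_select_eq (sets : A → Bool) (aux : A → γ) (g : List A → γ) (l : List A)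
    (hwrite : ∀ l₁ b l₂, l = l₁ ++ b :: l₂ → sets b = true → aux b = g (l₁ ++ [b]))
    (hskip : ∀ l₁ b l₂, l = l₁ ++ b :: l₂ → sets b = false → g (l₁ ++ [b]) = g l₁) :
    l.foldl (fun val b => if sets b then aux b else val) (g []) = g l := by
  induction l using List.reverseRecOn with
  | nil => rfl
  | append_singleton l b ih =>
    have hl : l ++ [b] = l ++ b :: [] := rfl
    rw [List.foldl_append, ih (fun l₁ b' l₂ h => hwrite l₁ b' (l₂ ++ [b]) (by simp [h]))
      (fun l₁ b' l₂ h => hskip l₁ b' (l₂ ++ [b]) (by simp [h]))]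
    cases hb : sets b
    · simp [hb, hskip l b [] hl hb]
    · simp [hb, hwrite l b [] hl hb]

/-- The value given to `v^a`, with `x₀` and `x₁` the values of `v` in the current and the next
state of a step of a model of `Π^S`. -/
noncomputable def lastWrite (ord : List A) (active sets : A → Bool) (x₀ x₁ : γ) (a : A) : γ :=
  if (before ord a ++ [a]).any (fun c => active c && sets c) then x₁ else x₀

variable {ord : List A} {active sets : A → Bool} {x₀ x₁ : γ} {a : A}

theorem lastWrite_of_active (ha : active a = true) (hs : sets a = true) :
    lastWrite ord active sets x₀ x₁ a = x₁ := by
  simp [lastWrite, ha, hs]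

theorem lastWrite_of_not_active (h : active a = false) :
    lastWrite ord active sets x₀ x₁ a =
      if (before ord a).any (fun c => active c && sets c) then x₁ else x₀ := by
  simp [lastWrite, h]

theorem foldl_lastWrite (hnd : ord.Nodup) {l : List A} (hl : l <+: ord) :
    l.foldl (fun val b => if sets b then lastWrite ord active sets x₀ x₁ b else val) x₀ =
      if l.any (fun c => active c && sets c) then x₁ else x₀ := by
  obtain ⟨t, rfl⟩ := hl
  refine foldl_select_eq sets _ (fun l => if l.any (fun c => active c && sets c) then x₁ else x₀)
    l ?_ ?_
  · intro l₁ b l₂ h hb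
    rw [lastWrite, before_eq_of_eq_append (l₁ := l₁) (l₂ := l₂ ++ t) hnd (by simp [h])]
  · intro l₁ b l₂ _ hb
    simp [hb]

end LastWrite

section Step

variable {VB VN A : Type} (P : Problem VB VN A) (ord : List A)

noncomputable def ltAuxB (β : VB → Bool) (u : A → ℕ) (β' : VB → Bool) (a : A) (v : VB) : Bool :=
  lastWrite ord (fun c => decide (u c ≠ 0)) (fun c => ((P.acts c).effB v).isSome) (β v) (β' v) a

noncomputable def ltAuxN (ν : VN → ℚ) (u : A → ℕ) (ν' : VN → ℚ) (a : A) (x : VN) : ℚ :=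
  lastWrite ord (fun c => decide (u c ≠ 0)) (fun c => ((P.acts c).effN x).isSome) (ν x) (ν' x) a

variable {P ord} {β : VB → Bool} {ν : VN → ℚ} {u : A → ℕ} {β' : VB → Bool} {ν' : VN → ℚ}

theorem chainB_ltAuxB (hnd : ord.Nodup) {l : List A} (hl : l <+: ord) (v : VB) :
    chainB P.acts l β (ltAuxB P ord β u β') v =
      if l.any (fun c => decide (u c ≠ 0) && ((P.acts c).effB v).isSome) then β' v else β v :=
  foldl_lastWrite hnd hl

theorem chainN_ltAuxN (hnd : ord.Nodup) {l : List A} (hl : l <+: ord) (x : VN) :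
    chainN P.acts l ν (ltAuxN P ord ν u ν') x =
      if l.any (fun c => decide (u c ≠ 0) && ((P.acts c).effN x).isSome) then ν' x else ν x :=
  foldl_lastWrite hnd hl

theorem ltAuxB_of_active {a : A} (ha : u a ≠ 0) {v : VB} (hv : (P.acts a).assignsB v) :
    ltAuxB P ord β u β' a v = β' v :=
  lastWrite_of_active (decide_eq_true ha) (Option.isSome_iff_ne_none.mpr hv)

theorem ltAuxN_of_active {a : A} (ha : u a ≠ 0) {x : VN} (hx : (P.acts a).assignsN x) :
    ltAuxN P ord ν u ν' a x = ν' x :=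
  lastWrite_of_active (decide_eq_true ha) (Option.isSome_iff_ne_none.mpr hx)

theorem ltAuxB_of_inactive (hnd : ord.Nodup) {a : A} (ha : u a = 0) (v : VB) :
    ltAuxB P ord β u β' a v = chainB P.acts (before ord a) β (ltAuxB P ord β u β') v := by
  rw [chainB_ltAuxB hnd (before_isPrefix ord a)]
  exact lastWrite_of_not_active (decide_eq_false (not_not.mpr ha))

theorem ltAuxN_of_inactive (hnd : ord.Nodup) {a : A} (ha : u a = 0) (x : VN) :
    ltAuxN P ord ν u ν' a x = chainN P.acts (before ord a) ν (ltAuxN P ord ν u ν') x := by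
  rw [chainN_ltAuxN hnd (before_isPrefix ord a)]
  exact lastWrite_of_not_active (decide_eq_false (not_not.mpr ha))

variable [Fintype VN]

theorem chainB_before_of_TR (hnd : ord.Nodup) (hTR : TR P β ν u β' ν') {a : A} (ha : u a ≠ 0)
    {v : VB} {b : Bool} (hb : β v = b)
    (hconflict : ∀ c, (P.acts c).effB v = some !b → mutexCond (P.acts a) (P.acts c)) :
    chainB P.acts (before ord a) β (ltAuxB P ord β u β') v = b := by
  obtain ⟨-, -, heff, -, -, hmutex, -⟩ := hTR
  rw [chainB_ltAuxB hnd (before_isPrefix ord a)]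
  split_ifs with hwritten
  · simp only [List.any_eq_true, Bool.and_eq_true, decide_eq_true_eq,
      Option.isSome_iff_exists] at hwritten
    obtain ⟨c, hc, hcu, b', hb'⟩ := hwritten
    have hcb : b' = b := by
      by_contra hne
      have hconf := hconflict c (by rw [hb']; cases b <;> cases b' <;> simp_all)
      rcases hmutex a c (ne_of_mem_before hc).symm hconf with h | h
      · exact ha h
      · exact hcu h
    exact hcb ▸ (heff c (Nat.pos_of_ne_zero hcu)).1 v b' hb'
  · exact hb

theorem chainN_before_of_TR (hnd : ord.Nodup) (hTR : TR P β ν u β' ν') {a : A} (ha : u a ≠ 0)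
    {x : VN} (hx : occursInEff (P.acts a) x ∨ occursInPre (P.acts a) x) :
    chainN P.acts (before ord a) ν (ltAuxN P ord ν u ν') x = ν x := by
  obtain ⟨-, -, -, -, -, hmutex, -⟩ := hTR
  rw [chainN_ltAuxN hnd (before_isPrefix ord a), if_neg]
  simp only [List.any_eq_true, Bool.and_eq_true, decide_eq_true_eq, Option.isSome_iff_ne_none,
    not_exists, not_and]
  intro c hc hcu hcx
  rcases hmutex c a (ne_of_mem_before hc) (Or.inr (Or.inr ⟨x, hcx, hx⟩)) with h | h
  · exact hcu h
  · exact ha h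

theorem eval_chainN_before_of_TR (hnd : ord.Nodup) (hTR : TR P β ν u β' ν') {a : A}
    (ha : u a ≠ 0) {e : LinExpr VN}
    (he : ∀ x, e.coeff x ≠ 0 → occursInEff (P.acts a) x ∨ occursInPre (P.acts a) x) :
    e.eval (chainN P.acts (before ord a) ν (ltAuxN P ord ν u ν')) = e.eval ν :=
  e.eval_congr fun x hx => chainN_before_of_TR hnd hTR ha (he x hx)

theorem Tlt_of_TS (hnd : ord.Nodup) (hall : ∀ a, a ∈ ord) (hTS : TS P β ν u β' ν') :
    Tlt P ord β ν (fun a => decide (u a ≠ 0)) (ltAuxB P ord β u β') (ltAuxN P ord ν u ν')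
      β' ν' := by
  obtain ⟨hTR, hle⟩ := hTS
  obtain ⟨hpre, -, heff, hframeB, hframeN, -⟩ := id hTR
  refine ⟨?pre, ?effB, ?effN, ?frameB, ?frameN⟩
  case pre =>
    intro a ha
    have ha : u a ≠ 0 := of_decide_eq_true ha
    obtain ⟨hfalse, htrue, hnum⟩ := hpre a (Nat.pos_of_ne_zero ha)
    refine ⟨fun v hv => ?_, fun v hv => ?_, fun c hc => ?_⟩
    · exact chainB_before_of_TR hnd hTR ha (hfalse v hv) fun c hc => Or.inl ⟨v, hv, hc⟩
    · exact chainB_before_of_TR hnd hTR ha (htrue v hv) fun c hc => Or.inr (Or.inl ⟨v, hv, hc⟩)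
    · rw [eval_chainN_before_of_TR hnd hTR ha fun x hx => Or.inr ⟨c, hc, hx⟩]
      exact hnum c hc
  case effB =>
    intro a v b hvb
    refine ⟨fun ha => ?_, fun ha => ?_⟩
    · have ha : u a ≠ 0 := of_decide_eq_true ha
      rw [ltAuxB_of_active ha (by simp [Act.assignsB, hvb])]
      exact (heff a (Nat.pos_of_ne_zero ha)).1 v b hvb
    · exact ltAuxB_of_inactive hnd (by simpa using ha) v
  case effN =>
    intro a x e hxe
    refine ⟨fun ha => ?_, fun ha => ?_⟩
    · have ha : u a ≠ 0 := of_decide_eq_true ha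
      rw [ltAuxN_of_active ha (by simp [Act.assignsN, hxe]),
        eval_chainN_before_of_TR hnd hTR ha fun y hy => Or.inl (Or.inr ⟨x, e, hxe, hy⟩)]
      obtain ⟨hincr, hgeneral⟩ := (heff a (Nat.pos_of_ne_zero ha)).2 x e hxe
      by_cases hx : (P.acts a).isIncr x e
      · have hu : u a = 1 := le_antisymm (hle a) (Nat.one_le_iff_ne_zero.mpr ha)
        rw [hincr hx, hu, incrPart_eval hx.1]
        ring
      · exact hgeneral hx
    · exact ltAuxN_of_inactive hnd (by simpa using ha) x
  case frameB =>
    intro v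
    rw [chainB_ltAuxB hnd (List.prefix_refl ord)]
    split_ifs with hwritten
    · rfl
    · refine hframeB v fun c hc => ?_
      by_contra hcu
      exact hwritten (List.any_eq_true.mpr ⟨c, hall c, by simp_all [Act.assignsB]⟩)
  case frameN =>
    intro x
    rw [chainN_ltAuxN hnd (List.prefix_refl ord)]
    split_ifs with hwritten
    · rfl
    · refine hframeN x fun c hc => ?_
      by_contra hcu
      exact hwritten (List.any_eq_true.mpr ⟨c, hall c, by simp_all [Act.assignsN]⟩)

end Step

theorem filter_eq_flatMap_replicate {A : Type} {u : A → ℕ} (hle : ∀ a, u a ≤ 1) (l : List A) :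
    l.filter (fun a => decide (u a ≠ 0)) = l.flatMap (fun a => List.replicate (u a) a) := by
  induction l with
  | nil => rfl
  | cons a t ih =>
    rw [List.filter_cons, List.flatMap_cons, ← ih]
    rcases Nat.le_one_iff_eq_zero_or_eq_one.mp (hle a) with h | h <;> simp [h]

noncomputable def RModel.toLtModel {VB VN A : Type} {n : ℕ} (m : RModel VB VN A n)
    (P : Problem VB VN A) (ord : List A) : LtModel VB VN A n where
  β := m.β
  ν := m.ν
  actb i a := decide (m.u i a ≠ 0)
  auxB i := ltAuxB P ord (m.β i.castSucc) (m.u i) (m.β i.succ)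
  auxN i := ltAuxN P ord (m.ν i.castSucc) (m.u i) (m.ν i.succ)

section Model

variable {VB VN A : Type} [Fintype VN] {n : ℕ} {P : Problem VB VN A} {ord : List A}
  {m : RModel VB VN A n}

theorem RModel.toLtModel_valid (hnd : ord.Nodup) (hall : ∀ a, a ∈ ord) (hm : m.validS P) :
    (m.toLtModel P ord).valid P ord :=
  let ⟨hβ, hν, hT, hG⟩ := hm
  ⟨hβ, hν, fun i => Tlt_of_TS hnd hall (hT i), hG⟩

theorem RModel.plans_toLtModel_plan (hnd : ord.Nodup) (hall : ∀ a, a ∈ ord) (hm : m.validS P) :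
    m.plans ((m.toLtModel P ord).plan ord) :=
  ⟨fun i => ord.filter fun a => decide (m.u i a ≠ 0),
    fun i => ⟨ord, hnd, hall, filter_eq_flatMap_replicate (hm.2.2.1 i).2 ord⟩, rfl⟩

end Model

theorem r2e_dominates_standard_general
    {VB VN A : Type} [Fintype VN]
    (P : Problem VB VN A) (ord : List A) (hnd : ord.Nodup) (hall : ∀ a : A, a ∈ ord)
    (n : ℕ) :
    (satS P n → satLt P ord n) ∧
    (∀ mS : RModel VB VN A n, mS.validS P →
      ∃ mL : LtModel VB VN A n, mL.valid P ord ∧ mS.plans (mL.plan ord)) :=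
  ⟨fun ⟨mS, hS⟩ => ⟨mS.toLtModel P ord, mS.toLtModel_valid hnd hall hS⟩,
    fun mS hS => ⟨mS.toLtModel P ord, mS.toLtModel_valid hnd hall hS,
      mS.plans_toLtModel_plan hnd hall hS⟩⟩

/-- for every total order `<` of the actions, the R²∃ `<`-encoding `Π^<`
dominates the standard encoding `Π^S`; moreover, from any model of `Π^S_n` one can
define a model of `Π^<_n` with the same corresponding plan. -/
theorem r2e_dominates_standard
    {VB VN A : Type} [Fintype VB] [Fintype VN] [Fintype A]
    (P : Problem VB VN A) (ord : List A) (hnd : ord.Nodup) (hall : ∀ a : A, a ∈ ord)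
    (n : ℕ) :
    (satS P n → satLt P ord n) ∧
    (∀ mS : RModel VB VN A n, mS.validS P →
      ∃ mL : LtModel VB VN A n, mL.valid P ord ∧ mS.plans (mL.plan ord)) :=
  r2e_dominates_standard_general P ord hnd hall n

end PatternPlanning
end
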